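/- arXiv:2210.07850 — 5 statements merged into one kernel-verified Lean document; each statement's English description precedes it below -/
import Mathlib

section
/- Let (b_m^2)_{m≥0} be a nonincreasing sequence of nonnegative reals and (s_m)_{m≥0} a nondecreasing sequence of nonnegative reals, and set R_m = b_m^2 + s_m. Define the balanced oracle m^b = inf{m ≥ 0 : b_m^2 ≤ s_m} (assumed finite) and the classical oracle m^o = argmin_{m≥0} R_m. Then R_{m^b} ≤ 2 R_{m^o} + (s_{m^b} - s_{m^b - 1}), where the discretization term is taken as 0 if m^b = 0. -/
/-- Optimality of the balanced oracle: if `b` (squared bias) is nonincreasing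
and `s` (stochastic error) is nondecreasing, `R m = b m + s m`, `mb` is the
least index with `b mb ≤ s mb`, and `mo` minimizes `R`, then
`R mb ≤ 2 * R mo + (s mb - s (mb - 1))`. -/
theorem balanced_oracle_optimality
    (b s R : ℕ → ℝ)
    (hb0 : ∀ m, 0 ≤ b m) (hs0 : ∀ m, 0 ≤ s m)
    (hb : Antitone b) (hs : Monotone s)
    (hR : ∀ m, R m = b m + s m)
    (mb mo : ℕ)
    (hmb : b mb ≤ s mb)
    (hmb_least : ∀ m, b m ≤ s m → mb ≤ m)
    (hmo : ∀ m, R mo ≤ R m) :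
    R mb ≤ 2 * R mo + (s mb - s (mb - 1)) := by
  have hdiff : 0 ≤ s mb - s (mb - 1) := sub_nonneg.2 (hs (Nat.sub_le mb 1))
  rcases le_or_gt mb mo with h | h
  · have : R mb ≤ 2 * R mo := by
      have h1 : R mb ≤ 2 * s mb := by rw [hR]; linarith [hmb]
      have h2 : s mb ≤ s mo := hs h
      have h3 : s mo ≤ R mo := by rw [hR]; linarith [hb0 mo]
      linarith
    linarith
  · -- mo < mb, so b mo > s mo, and mb ≥ 1
    have hbo : ¬ b mo ≤ s mo := fun hle => absurd (hmb_least mo hle) (not_le.2 h)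
    push_neg at hbo
    have hmb1 : mb - 1 < mb := Nat.sub_lt (Nat.pos_of_ne_zero (by omega)) one_pos
    have hb1 : ¬ b (mb - 1) ≤ s (mb - 1) :=
      fun hle => absurd (hmb_least _ hle) (not_le.2 hmb1)
    push_neg at hb1
    have hmo1 : mo ≤ mb - 1 := by omega
    have h4 : b mb ≤ b mo := hb (le_of_lt h)
    have h5 : b (mb - 1) ≤ b mo := hb hmo1
    have h6 : b mo ≤ R mo := by rw [hR]; linarith [hs0 mo]
    rw [hR]
    linarith
end

section
/- Let γ ≥ 1 and suppose the coefficients β ∈ ℝ^p satisfy ∑_{j=1}^p |β_j|^{1/γ} ≤ C. Then for every subset J ⊆ {1,…,p}: ∑_{j∈J} |β_j| ≤ C^{γ/(2γ−1)} (∑_{j∈J} |β_j|²)^{(γ−1)/(2γ−1)}. -/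
/-- ℓ^{1/γ}-boundedness implies γ-sparsity: if `γ ≥ 1` and
`∑ j, |β j|^(1/γ) ≤ C`, then for every subset `J`,
`∑_{j∈J} |β j| ≤ C^(γ/(2γ-1)) * (∑_{j∈J} |β j|²)^((γ-1)/(2γ-1))`. -/
theorem ell_one_over_gamma_implies_gamma_sparse
    (p : ℕ) (γ C : ℝ) (hγ : 1 ≤ γ) (β : Fin p → ℝ)
    (h : ∑ j, |β j| ^ ((1 : ℝ) / γ) ≤ C) :
    ∀ J : Finset (Fin p),
      ∑ j ∈ J, |β j|
        ≤ C ^ (γ / (2 * γ - 1)) * (∑ j ∈ J, |β j| ^ 2) ^ ((γ - 1) / (2 * γ - 1)) := by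
  intro J
  have hC0 : 0 ≤ C :=
    le_trans (Finset.sum_nonneg fun j _ => Real.rpow_nonneg (abs_nonneg _) _) h
  have hJ : ∑ j ∈ J, |β j| ^ ((1 : ℝ) / γ) ≤ C :=
    le_trans (Finset.sum_le_sum_of_subset_of_nonneg (Finset.subset_univ J)
      (fun j _ _ => Real.rpow_nonneg (abs_nonneg _) _)) h
  have hsq : 0 ≤ ∑ j ∈ J, |β j| ^ 2 :=
    Finset.sum_nonneg fun j _ => sq_nonneg _
  rcases eq_or_lt_of_le hγ with hγ1 | hγ1
  · -- γ = 1
    subst hγ1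
    norm_num
    calc ∑ j ∈ J, |β j| = ∑ j ∈ J, |β j| ^ ((1:ℝ)/1) := by
          simp
      _ ≤ C := hJ
  · -- γ > 1
    have h2γ : (0:ℝ) < 2 * γ - 1 := by linarith
    have hγ0 : (0:ℝ) < γ := by linarith
    have hγm1 : (0:ℝ) < γ - 1 := by linarith
    have hpq : Real.HolderConjugate ((2*γ-1)/γ) ((2*γ-1)/(γ-1)) := by
      rw [Real.holderConjugate_iff]; constructor
      · rw [lt_div_iff₀ hγ0]; linarith
      · field_simp
        ring
    have key := Real.inner_le_Lp_mul_Lq_of_nonneg (s := J)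
      (f := fun j => |β j| ^ ((1:ℝ)/(2*γ-1)))
      (g := fun j => |β j| ^ ((2*γ-2)/(2*γ-1))) hpq
      (fun j _ => Real.rpow_nonneg (abs_nonneg _) _)
      (fun j _ => Real.rpow_nonneg (abs_nonneg _) _)
    have e1 : ∀ j, |β j| ^ ((1:ℝ)/(2*γ-1)) * |β j| ^ ((2*γ-2)/(2*γ-1)) = |β j| := by
      intro j
      have hsum : (1:ℝ)/(2*γ-1) + (2*γ-2)/(2*γ-1) = 1 := by field_simp; ring
      rw [← Real.rpow_add' (abs_nonneg _) (by rw [hsum]; norm_num), hsum, Real.rpow_one]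
    have e2 : ∀ j, (|β j| ^ ((1:ℝ)/(2*γ-1))) ^ ((2*γ-1)/γ) = |β j| ^ ((1:ℝ)/γ) := by
      intro j
      rw [← Real.rpow_mul (abs_nonneg _)]
      congr 1
      field_simp
    have e3 : ∀ j, (|β j| ^ ((2*γ-2)/(2*γ-1))) ^ ((2*γ-1)/(γ-1)) = |β j| ^ (2:ℕ) := by
      intro j
      rw [← Real.rpow_mul (abs_nonneg _)]
      rw [show (2*γ-2)/(2*γ-1) * ((2*γ-1)/(γ-1)) = (2:ℕ) by push_cast; field_simp]
      exact Real.rpow_natCast _ 2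
    simp only [e1] at key
    rw [Finset.sum_congr rfl (fun j _ => e2 j), Finset.sum_congr rfl (fun j _ => e3 j)] at key
    refine le_trans key ?_
    have hexp1 : 1 / ((2*γ-1)/γ) = γ / (2*γ-1) := by field_simp
    have hexp2 : 1 / ((2*γ-1)/(γ-1)) = (γ-1) / (2*γ-1) := by field_simp
    rw [hexp1, hexp2]
    apply mul_le_mul_of_nonneg_right
    · exact Real.rpow_le_rpow (Finset.sum_nonneg fun j _ => Real.rpow_nonneg (abs_nonneg _) _)
        hJ (by positivity)
    · exact Real.rpow_nonneg hsq _
end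

section
/- Let (a_m)_{m≥0} be a sequence of nonnegative reals with a_0 ≤ A and a_{m+1} ≤ a_m (1 − c a_m^α) for all m ≥ 0, where A, c > 0 and α ∈ (0,1]. Then a_m ≤ max(2^{1/α²} (cα)^{−1/α}, A) · m^{−1/α} for all m ≥ 1. -/
/-- Deterministic recursion lemma (Gao–Ing–Yang): if `a 0 ≤ A` and
`a (m+1) ≤ a m * (1 - c * a m ^ α)` with `A, c > 0`, `α ∈ (0,1]`, then
`a m ≤ max (2^(1/α²) * (cα)^(-1/α)) A * m^(-1/α)` for all `m ≥ 1`. -/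
theorem recursion_rate_lemma
    (a : ℕ → ℝ) (A c α : ℝ)
    (hA : 0 < A) (hc : 0 < c) (hα : 0 < α) (hα1 : α ≤ 1)
    (ha0 : ∀ m, 0 ≤ a m)
    (haA : a 0 ≤ A)
    (hrec : ∀ m : ℕ, a (m + 1) ≤ a m * (1 - c * a m ^ α)) :
    ∀ m : ℕ, 1 ≤ m →
      a m ≤ max ((2 : ℝ) ^ (1 / α ^ 2) * (c * α) ^ (-(1 / α))) A * (m : ℝ) ^ (-(1 / α)) := by
  have key : ∀ m : ℕ, c * α * m * a m ^ α ≤ 1 := by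
    intro m
    induction m with
    | zero => simp
    | succ m ih =>
      set x : ℝ := a m ^ α with hx
      have hx0 : 0 ≤ x := Real.rpow_nonneg (ha0 m) α
      by_cases hcase : 1 ≤ c * x
      · -- then a (m+1) = 0
        have h1 : a (m + 1) ≤ 0 := by
          refine (hrec m).trans (mul_nonpos_iff.2 (Or.inl ⟨ha0 m, by linarith⟩))
        have h2 : a (m + 1) = 0 := le_antisymm h1 (ha0 _)
        rw [h2, Real.zero_rpow hα.ne']
        norm_num
      · push_neg at hcase
        have h1s : (0:ℝ) ≤ 1 - c * x := by nlinarith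
        have hstep : a (m + 1) ^ α ≤ x * (1 - c * x) ^ α := by
          calc a (m + 1) ^ α ≤ (a m * (1 - c * x)) ^ α :=
                Real.rpow_le_rpow (ha0 _) (hrec m) hα.le
            _ = a m ^ α * (1 - c * x) ^ α := Real.mul_rpow (ha0 m) h1s
        have hbern : (1 - c * x) ^ α ≤ 1 - α * (c * x) := by
          have := rpow_one_add_le_one_add_mul_self (s := -(c * x)) (by linarith)
            hα.le hα1
          simpa [sub_eq_add_neg, mul_comm] using this
        have hb2 : a (m + 1) ^ α ≤ x * (1 - α * (c * x)) := by
          refine hstep.trans (mul_le_mul_of_nonneg_left hbern hx0)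
        have hcoef : (0:ℝ) ≤ c * α * (m + 1 : ℕ) := by positivity
        have : c * α * (m + 1 : ℕ) * a (m + 1) ^ α
            ≤ c * α * (m + 1 : ℕ) * (x * (1 - α * (c * x))) :=
          mul_le_mul_of_nonneg_left hb2 hcoef
        refine this.trans ?_
        push_cast
        have hαs : α * (c * x) ≤ c * x := mul_le_of_le_one_left (mul_nonneg hc.le hx0) hα1
        nlinarith [ih, mul_nonneg (mul_nonneg hc.le hx0) hα.le,
          sq_nonneg (α * (c * x)), mul_nonneg (mul_nonneg hc.le hα.le) hx0]
  intro m hm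
  have hm0 : (0:ℝ) < (m:ℝ) := by exact_mod_cast hm
  have hcα : (0:ℝ) < c * α := mul_pos hc hα
  have hprod : (0:ℝ) < c * α * m := by positivity
  have h1 : a m ^ α ≤ (c * α * (m:ℝ))⁻¹ := by
    rw [← one_div, le_div_iff₀ hprod]
    linarith [key m]
  have h2 : a m ≤ ((c * α * (m:ℝ))⁻¹) ^ (α⁻¹) := by
    have h := Real.rpow_le_rpow (Real.rpow_nonneg (ha0 m) α) h1 (by positivity : (0:ℝ) ≤ α⁻¹)
    rwa [Real.rpow_rpow_inv (ha0 m) hα.ne'] at h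
  have h3 : ((c * α * (m:ℝ))⁻¹) ^ (α⁻¹) = (c * α) ^ (-(1/α)) * (m:ℝ) ^ (-(1/α)) := by
    rw [one_div, Real.rpow_neg hcα.le, Real.rpow_neg hm0.le,
      Real.inv_rpow hprod.le, Real.mul_rpow hcα.le hm0.le, mul_inv]
  rw [h3] at h2
  refine h2.trans ?_
  have hmexp : (0:ℝ) ≤ (m:ℝ) ^ (-(1/α)) := Real.rpow_nonneg hm0.le _
  refine mul_le_mul_of_nonneg_right ?_ hmexp
  refine le_trans ?_ (le_max_left _ _)
  have h4 : (1:ℝ) ≤ (2:ℝ) ^ (1 / α ^ 2) := Real.one_le_rpow (by norm_num) (by positivity)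
  nlinarith [Real.rpow_nonneg hcα.le (-(1/α))]
end

section
/- Let γ ≥ 1 and β ∈ ℝ^p be decreasingly ordered in absolute value, with the γ-sparsity property: for every set J ⊆ {1,…,p}, ∑_{j∈J}|β_j| ≤ C_γ (∑_{j∈J}|β_j|²)^{(γ−1)/(2γ−1)}. Then for every m with 1 ≤ m < p, the tails a_m := ∑_{j>m} |β_j|² satisfy a_{m+1} ≤ a_m (1 − C_γ^{−2} a_m^{1/(2γ−1)}). -/
/-- Tail recursion under γ-sparsity: if `β` (indexed by `1,…,p`) is
decreasingly ordered in absolute value and γ-sparse with constant `Cγ`, then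
the tails `a m = ∑_{j>m} |β j|²` satisfy
`a (m+1) ≤ a m * (1 - Cγ⁻² * a m ^ (1/(2γ-1)))` for `1 ≤ m < p`. -/
theorem gamma_sparse_tail_recursion
    (p : ℕ) (γ Cγ : ℝ) (hγ : 1 ≤ γ) (hCγ : 0 < Cγ)
    (β : ℕ → ℝ)
    (hdec : ∀ i j : ℕ, 1 ≤ i → i ≤ j → |β j| ≤ |β i|)
    (hsparse : ∀ J : Finset ℕ, J ⊆ Finset.Icc 1 p →
      ∑ j ∈ J, |β j| ≤ Cγ * (∑ j ∈ J, |β j| ^ 2) ^ ((γ - 1) / (2 * γ - 1)))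
    (a : ℕ → ℝ)
    (ha : ∀ m, a m = ∑ j ∈ Finset.Ioc m p, |β j| ^ 2) :
    ∀ m : ℕ, 1 ≤ m → m < p →
      a (m + 1) ≤ a m * (1 - Cγ⁻¹ ^ 2 * a m ^ ((1 : ℝ) / (2 * γ - 1))) := by
  intro m hm hmp
  have hden : (0:ℝ) < 2 * γ - 1 := by linarith
  have hsplit : a m = |β (m+1)|^2 + a (m+1) := by
    rw [ha, ha]
    have hset : Finset.Ioc m p = insert (m+1) (Finset.Ioc (m+1) p) := by
      ext j; simp only [Finset.mem_Ioc, Finset.mem_insert]; omega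
    rw [hset, Finset.sum_insert (by simp)]
  have ham_nonneg : 0 ≤ a m := by
    rw [ha]; exact Finset.sum_nonneg fun j _ => sq_nonneg _
  by_cases h0 : a m = 0
  · rw [h0]
    rw [Real.zero_rpow (by positivity : ((1:ℝ)/(2*γ-1)) ≠ 0)]
    have : a (m+1) ≤ 0 := by nlinarith [sq_nonneg (|β (m+1)|)]
    nlinarith
  · have hpos : 0 < a m := lt_of_le_of_ne ham_nonneg (Ne.symm h0)
    set e1 : ℝ := (γ - 1) / (2 * γ - 1) with he1
    have key1 : a m ≤ |β (m+1)| * ∑ j ∈ Finset.Ioc m p, |β j| := by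
      rw [ha, Finset.mul_sum]
      apply Finset.sum_le_sum
      intro j hj
      have hj1 : m + 1 ≤ j := (Finset.mem_Ioc.mp hj).1
      have hd := hdec (m+1) j (by omega) hj1
      calc |β j|^2 = |β j| * |β j| := sq (|β j|)
        _ ≤ |β (m+1)| * |β j| := mul_le_mul_of_nonneg_right hd (abs_nonneg _)
    have key2 : ∑ j ∈ Finset.Ioc m p, |β j| ≤ Cγ * (a m) ^ e1 := by
      rw [ha]
      exact hsparse _ (fun j hj => by
        simp only [Finset.mem_Ioc, Finset.mem_Icc] at *; omega)
    have key3 : a m ≤ Cγ * |β (m+1)| * (a m) ^ e1 := by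
      calc a m ≤ |β (m+1)| * ∑ j ∈ Finset.Ioc m p, |β j| := key1
        _ ≤ |β (m+1)| * (Cγ * (a m) ^ e1) :=
            mul_le_mul_of_nonneg_left key2 (abs_nonneg _)
        _ = Cγ * |β (m+1)| * (a m) ^ e1 := by ring
    set X : ℝ := (a m) ^ (γ / (2*γ-1)) with hX
    have hXam : X * (a m) ^ e1 = a m := by
      rw [hX, ← Real.rpow_add hpos]
      have : γ / (2*γ-1) + e1 = 1 := by
        rw [he1, ← add_div, div_eq_one_iff_eq hden.ne']; ring
      rw [this, Real.rpow_one]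
    have hXle : X ≤ Cγ * |β (m+1)| := by
      have h1pos : (0:ℝ) < (a m) ^ e1 := Real.rpow_pos_of_pos hpos _
      apply le_of_mul_le_mul_right _ h1pos
      rw [hXam]; exact key3
    have hXnn : 0 ≤ X := Real.rpow_nonneg ham_nonneg _
    have hsq : X * X ≤ (Cγ * |β (m+1)|) * (Cγ * |β (m+1)|) :=
      mul_self_le_mul_self hXnn hXle
    have hXX : X * X = a m * (a m) ^ ((1:ℝ)/(2*γ-1)) := by
      rw [hX, ← Real.rpow_add hpos]
      nth_rewrite 2 [← Real.rpow_one (a m)]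
      rw [← Real.rpow_add hpos]
      congr 1
      rw [← add_div, one_add_div hden.ne']; congr 1; ring
    have hkey : Cγ⁻¹ ^ 2 * (a m * (a m) ^ ((1:ℝ)/(2*γ-1))) ≤ |β (m+1)|^2 := by
      rw [← hXX, inv_pow, inv_mul_le_iff₀ (by positivity)]
      nlinarith
    nlinarith [hsplit, hkey]
end

section
/- Let H be a real inner product space with elements g₁,…,g_p, and for J ⊆ {1,…,p} let Π_J be the orthogonal projection onto span{g_j : j ∈ J}. Suppose f* = ∑_{j=1}^p β*_j g_j and that the coefficient representation of Π_J f* in terms of (g_j)_{j∈J} is given by Γ_J^{−1}⟨f*, g_J⟩, where Γ_J = (⟨g_j, g_k⟩)_{j,k∈J} is invertible and ⟨f*, g_J⟩ = (⟨f*, g_j⟩)_{j∈J}. If sup_{k∉J} ‖Γ_J^{−1}(⟨g_k, g_j⟩)_{j∈J}‖₁ ≤ C, then the coefficients β̃ of the residual (I − Π_J) f*, defined by β̃_j = β*_j − (Γ_J^{−1}⟨f*, g_J⟩)_j for j ∈ J and β̃_j = β*_j for j ∉ J, satisfy ‖β̃‖₁ ≤ (C+1) ∑_{j∉J} |β*_j|.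 -/
open scoped RealInnerProductSpace

/-- Uniform Baxter's inequality: let `f* = ∑ β*_j g_j`, let `Γ_J` be the Gram
matrix of `(g_j)_{j∈J}` with inverse `Γinv`, and suppose
`‖Γ_J⁻¹ (⟪g_k, g_j⟫)_{j∈J}‖₁ ≤ C` for every `k ∉ J`. Then the residual
coefficients `β̃` (given by `β*_j - (Γ_J⁻¹⟨f*, g_J⟩)_j` on `J` and `β*_j`
off `J`) satisfy `‖β̃‖₁ ≤ (C+1) ∑_{j∉J} |β*_j|`. -/
theorem uniform_baxter_inequality
    {H : Type*} [NormedAddCommGroup H] [InnerProductSpace ℝ H]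
    (p : ℕ) (g : Fin p → H) (βstar : Fin p → ℝ) (f : H)
    (hf : f = ∑ j, βstar j • g j)
    (J : Finset (Fin p))
    (Γ Γinv : Matrix J J ℝ)
    (hΓ : ∀ j k : J, Γ j k = ⟪g (j : Fin p), g (k : Fin p)⟫)
    (hinv_l : Γinv * Γ = 1) (hinv_r : Γ * Γinv = 1)
    (C : ℝ)
    (hC : ∀ k : Fin p, k ∉ J →
      ∑ j : J, |Γinv.mulVec (fun i : J => ⟪g k, g (i : Fin p)⟫) j| ≤ C)
    (βt : Fin p → ℝ)
    (hβt : ∀ j : Fin p,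
      βt j = if hj : j ∈ J then
          βstar j - Γinv.mulVec (fun i : J => ⟪f, g (i : Fin p)⟫) ⟨j, hj⟩
        else βstar j) :
    ∑ j, |βt j| ≤ (C + 1) * ∑ j ∈ Jᶜ, |βstar j| := by
  classical
  set v : Fin p → {x : Fin p // x ∈ J} → ℝ := fun k i => ⟪g k, g (i : Fin p)⟫ with hv
  have hfv : ∀ i : J, ⟪f, g (i : Fin p)⟫ = ∑ k, βstar k * v k i := by
    intro i
    rw [hf, sum_inner]
    simp [real_inner_smul_left, hv]
  have key : ∀ j : J, Γinv.mulVec (fun i : J => ⟪f, g (i : Fin p)⟫) j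
      = βstar j + ∑ k ∈ Jᶜ, βstar k * Γinv.mulVec (v k) j := by
    intro j
    have h1 : (fun i : J => ⟪f, g (i : Fin p)⟫)
        = (fun i : J => ∑ k ∈ J, βstar k * v k i)
          + (fun i : J => ∑ k ∈ Jᶜ, βstar k * v k i) := by
      funext i
      simp only [Pi.add_apply, hfv i]
      rw [← Finset.sum_add_sum_compl J]
    rw [h1, Matrix.mulVec_add]
    have h2 : (fun i : J => ∑ k ∈ J, βstar k * v k i)
        = Γ.mulVec (fun k : J => βstar k) := by
      funext i
      rw [Matrix.mulVec, dotProduct]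
      rw [← Finset.sum_attach J (fun k => βstar k * v k i)]
      apply Finset.sum_congr rfl
      intro k _
      rw [hΓ i k, mul_comm]
      congr 1
      exact real_inner_comm _ _
    have h3 : Γinv.mulVec ((fun i : J => ∑ k ∈ J, βstar k * v k i)) j = βstar j := by
      rw [h2, Matrix.mulVec_mulVec, hinv_l, Matrix.one_mulVec]
    have h4 : Γinv.mulVec (fun i : J => ∑ k ∈ Jᶜ, βstar k * v k i) j
        = ∑ k ∈ Jᶜ, βstar k * Γinv.mulVec (v k) j := by
      simp only [Matrix.mulVec, dotProduct, Finset.mul_sum]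
      rw [Finset.sum_comm]
      apply Finset.sum_congr rfl
      intro k _
      apply Finset.sum_congr rfl
      intro i _
      ring
    simp [Pi.add_apply, h3, h4]
  have split : ∑ j, |βt j| = ∑ j ∈ J, |βt j| + ∑ j ∈ Jᶜ, |βt j| :=
    (Finset.sum_add_sum_compl J _).symm
  have hcomp : ∑ j ∈ Jᶜ, |βt j| = ∑ j ∈ Jᶜ, |βstar j| := by
    apply Finset.sum_congr rfl
    intro j hj
    rw [hβt j, dif_neg (Finset.mem_compl.mp hj)]
  have hJ : ∑ j ∈ J, |βt j| ≤ C * ∑ k ∈ Jᶜ, |βstar k| := by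
    rw [← Finset.sum_attach J (fun j => |βt j|)]
    have hterm : ∀ j : J, |βt j| = |∑ k ∈ Jᶜ, βstar k * Γinv.mulVec (v k) j| := by
      intro j
      rw [hβt j, dif_pos j.2]
      have : Γinv.mulVec (fun i : J => ⟪f, g (i : Fin p)⟫) ⟨(j : Fin p), j.2⟩
          = Γinv.mulVec (fun i : J => ⟪f, g (i : Fin p)⟫) j := by congr
      rw [this, key j]
      rw [show βstar (j : Fin p) - (βstar (j:Fin p) + ∑ k ∈ Jᶜ, βstar k * Γinv.mulVec (v k) j)
          = -(∑ k ∈ Jᶜ, βstar k * Γinv.mulVec (v k) j) by ring, abs_neg]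
    calc ∑ j ∈ J.attach, |βt (j : Fin p)|
        = ∑ j : J, |∑ k ∈ Jᶜ, βstar k * Γinv.mulVec (v k) j| := by
          apply Finset.sum_congr rfl; intro j _; exact hterm j
      _ ≤ ∑ j : J, ∑ k ∈ Jᶜ, |βstar k * Γinv.mulVec (v k) j| := by
          apply Finset.sum_le_sum; intro j _; exact Finset.abs_sum_le_sum_abs _ _
      _ = ∑ k ∈ Jᶜ, ∑ j : J, |βstar k| * |Γinv.mulVec (v k) j| := by
          rw [Finset.sum_comm]
          apply Finset.sum_congr rfl; intro k _
          apply Finset.sum_congr rfl; intro j _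
          exact abs_mul _ _
      _ = ∑ k ∈ Jᶜ, |βstar k| * ∑ j : J, |Γinv.mulVec (v k) j| := by
          apply Finset.sum_congr rfl; intro k _; rw [Finset.mul_sum]
      _ ≤ ∑ k ∈ Jᶜ, |βstar k| * C := by
          apply Finset.sum_le_sum; intro k hk
          exact mul_le_mul_of_nonneg_left (hC k (Finset.mem_compl.mp hk)) (abs_nonneg _)
      _ = C * ∑ k ∈ Jᶜ, |βstar k| := by rw [← Finset.sum_mul, mul_comm]
  rw [split, hcomp]
  linarith [hJ]
end
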